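/- There exists a compact metric space Y and a continuous map g : Y → Y such that the induced hyperspace map ḡ on K(Y) is topologically mixing and has a dense set of periodic points (hence is Devaney chaotic), while g itself is not Devaney chaotic because its periodic points are not dense in Y. -/

import Mathlib

open TopologicalSpace

/-- The induced map on the hyperspace of nonempty compact subsets. -/
def barMap {X : Type*} [TopologicalSpace X] (f : X → X) (hf : Continuous f) :
    NonemptyCompacts X → NonemptyCompacts X :=
  fun A => ⟨⟨f '' A, A.isCompact.image hf⟩, A.nonempty.image f⟩

/-- Topological transitivity. -/
def IsTransitive {X : Type*} [TopologicalSpace X] (f : X → X) : Prop :=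
  ∀ U V : Set X, IsOpen U → IsOpen V → U.Nonempty → V.Nonempty →
    ∃ n : ℕ, (f^[n] '' U ∩ V).Nonempty

/-- Topological mixing. -/
def IsMixing {X : Type*} [TopologicalSpace X] (f : X → X) : Prop :=
  ∀ U V : Set X, IsOpen U → IsOpen V → U.Nonempty → V.Nonempty →
    ∃ N : ℕ, ∀ n ≥ N, (f^[n] '' U ∩ V).Nonempty

/-- Weak mixing: `f × f` is transitive. -/
def IsWeaklyMixing {X : Type*} [TopologicalSpace X] (f : X → X) : Prop :=
  IsTransitive (fun p : X × X => (f p.1, f p.2))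

/-- The set of periodic points. -/
def Periodics {X : Type*} (f : X → X) : Set X := {x | ∃ n ≥ 1, f^[n] x = x}

/-!
Take `Y = {0,1}^ℕ × ℝ/ℤ` and the skew product `g (x, t) = (σ x, t + (1 + x₀)√2)`, so that
`gⁿ (x, t) = (σⁿ x, t + (n + #{i < n | xᵢ = 1})√2)`. As `k√2 ∉ ℤ` for `k ≥ 1`, `g` has no periodic
points. On the other hand, the rotation is steered by the letters of `x`: between a prescribed
prefix and a prescribed tail, a block of `j` ones adds `j√2`, and a bounded number of natural
multiples of `√2` is `ε`-dense mod 1. Splicing words in this way shows that `g` is mixing, and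
that every point lies near a compact set `Λ` with `g^N Λ = Λ`: the maximal `g^N`-invariant subset
of an `N`-periodic cylinder times a short arc. Mixing lifts to the hyperspace by approximating
compact sets with finite nets, and finite unions of such sets `Λ` are periodic points of `ḡ`
approximating any compact set.
-/

open Metric Set Function Filter

theorem nonempty_of_subset_biUnion {α ι : Type*} {A : Set α} {t : Set ι} {U : ι → Set α}
    (hA : A.Nonempty) (h : A ⊆ ⋃ i ∈ t, U i) : t.Nonempty :=
  (nonempty_biUnion.mp (hA.mono h)).imp fun _ hi => hi.1

theorem image_iterate_mul_eq {Z : Type*} {h : Z → Z} {s : Set Z} {N : ℕ} (hs : h^[N] '' s = s)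
    (k : ℕ) : h^[N * k] '' s = s := by
  rw [iterate_mul, image_iterate_eq]
  exact IsFixedPt.iterate hs k

theorem barMap_iterate_coe {Z : Type*} [TopologicalSpace Z] {h : Z → Z} (hh : Continuous h)
    (n : ℕ) (A : NonemptyCompacts Z) : ((barMap h hh)^[n] A : Set Z) = h^[n] '' A := by
  induction n with
  | zero => simp
  | succ n ih => rw [iterate_succ_apply', iterate_succ', image_comp, ← ih]; rfl

theorem IsMixing.eventually {Z : Type*} [TopologicalSpace Z] {h : Z → Z} (hmix : IsMixing h)
    {U V : Set Z} (hU : IsOpen U) (hV : IsOpen V) (hUne : U.Nonempty) (hVne : V.Nonempty) :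
    ∀ᶠ n in atTop, ∃ u ∈ U, h^[n] u ∈ V := by
  obtain ⟨N, hN⟩ := hmix U V hU hV hUne hVne
  filter_upwards [eventually_ge_atTop N] with n hn
  obtain ⟨_, ⟨u, hu, rfl⟩, hv⟩ := hN n hn
  exact ⟨u, hu, hv⟩

theorem exists_subset_image_eq_of_subset_image {Z : Type*} [TopologicalSpace Z] [T2Space Z]
    {h : Z → Z} (hh : Continuous h) {K : Set Z} (hK : IsCompact K) (hne : K.Nonempty)
    (hsurj : K ⊆ h '' K) : ∃ Λ ⊆ K, Λ.Nonempty ∧ IsCompact Λ ∧ h '' Λ = Λ := by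
  have hchain : ∀ n, ∃ p, ∀ i ≤ n, h^[i] p ∈ K := by
    intro n
    induction n with
    | zero => exact hne.imp fun p hp i hi => by rwa [Nat.le_zero.1 hi]
    | succ n ih =>
      obtain ⟨p, hp⟩ := ih
      obtain ⟨q, hq, rfl⟩ := hsurj (hp 0 n.zero_le)
      refine ⟨q, fun i hi => ?_⟩
      cases i with
      | zero => exact hq
      | succ i => exact hp i (by omega)
  have hclosed : ∀ i, IsClosed (h^[i] ⁻¹' K) := fun i => hK.isClosed.preimage (hh.iterate i)
  refine ⟨⋂ i, h^[i] ⁻¹' K, iInter_subset _ 0, ?_, ?_, ?_⟩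
  · refine (hK.inter_iInter_nonempty _ hclosed fun u => ?_).mono inter_subset_right
    obtain ⟨p, hp⟩ := hchain (u.sup id)
    exact ⟨p, hp 0 (Nat.zero_le _), mem_iInter₂.2 fun i hi => hp i (Finset.le_sup (f := id) hi)⟩
  · exact hK.of_isClosed_subset (isClosed_iInter hclosed) (iInter_subset _ 0)
  · refine Subset.antisymm ?_ fun q hq => ?_
    · rintro _ ⟨p, hp, rfl⟩
      refine mem_iInter.2 fun i => ?_
      rw [mem_preimage, ← iterate_succ_apply]
      exact mem_iInter.1 hp (i + 1)
    · obtain ⟨p, hp, rfl⟩ := hsurj (mem_iInter.1 hq 0)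
      refine ⟨p, mem_iInter.2 fun i => ?_, rfl⟩
      cases i with
      | zero => exact hp
      | succ i => exact mem_iInter.1 hq i

section Hyperspace

variable {X : Type*} [MetricSpace X] {f : X → X}

theorem hausdorffDist_le_of_net {P A t : Set X} {ε δ : ℝ} (hε : 0 ≤ ε) (hδ : 0 ≤ δ)
    (htA : t ⊆ A) (hA : A ⊆ ⋃ z ∈ t, ball z ε)
    (hP : ∀ p ∈ P, ∃ z ∈ t, dist p z ≤ δ) (ht : ∀ z ∈ t, ∃ p ∈ P, dist p z ≤ δ) :
    hausdorffDist P A ≤ ε + δ := by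
  refine hausdorffDist_le_of_mem_dist (by positivity) (fun p hp => ?_) (fun a ha => ?_)
  · obtain ⟨z, hz, hpz⟩ := hP p hp
    exact ⟨z, htA hz, by linarith⟩
  · obtain ⟨z, hz, haz⟩ := mem_iUnion₂.mp (hA ha)
    obtain ⟨p, hp, hpz⟩ := ht z hz
    exact ⟨p, hp, (dist_triangle_right a p z).trans (by linarith [mem_ball.mp haz])⟩

theorem isMixing_barMap (hf : Continuous f) (hmix : IsMixing f) : IsMixing (barMap f hf) := by
  intro U V hU hV ⟨A, hA⟩ ⟨B, hB⟩
  obtain ⟨r, hr, hrU⟩ := Metric.isOpen_iff.mp hU A hA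
  obtain ⟨r', hr', hrV⟩ := Metric.isOpen_iff.mp hV B hB
  obtain ⟨ε, hε, hεr, hεr'⟩ : ∃ ε > 0, ε + ε < r ∧ ε + ε < r' :=
    ⟨min r r' / 3, by positivity, by linarith [min_le_left r r', lt_min hr hr'],
      by linarith [min_le_right r r', lt_min hr hr']⟩
  obtain ⟨tA, htA, htAfin, hAcov⟩ := A.isCompact.finite_cover_balls hε
  obtain ⟨tB, htB, htBfin, hBcov⟩ := B.isCompact.finite_cover_balls hε
  obtain ⟨a₀, ha₀⟩ := nonempty_of_subset_biUnion A.nonempty hAcov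
  obtain ⟨b₀, hb₀⟩ := nonempty_of_subset_biUnion B.nonempty hBcov
  have hmixing : ∀ᶠ n in atTop, ∀ a ∈ tA, ∀ b ∈ tB, ∃ u ∈ ball a ε, f^[n] u ∈ ball b ε :=
    (htAfin.eventually_all).2 fun a _ => (htBfin.eventually_all).2 fun b _ =>
      hmix.eventually isOpen_ball isOpen_ball ⟨a, mem_ball_self hε⟩ ⟨b, mem_ball_self hε⟩
  obtain ⟨N, hN⟩ := eventually_atTop.mp hmixing
  refine ⟨N, fun n hn => ?_⟩
  choose! u hu hfu using hN n hn
  let P : NonemptyCompacts X :=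
    ⟨⟨image2 u tA tB, (htAfin.image2 u htBfin).isCompact⟩,
      image2_nonempty_iff.2 ⟨⟨a₀, ha₀⟩, ⟨b₀, hb₀⟩⟩⟩
  have hPA : dist P A ≤ ε + ε := by
    rw [NonemptyCompacts.dist_eq]
    refine hausdorffDist_le_of_net hε.le hε.le htA hAcov ?_ fun a ha => ?_
    · rintro _ ⟨a, ha, b, hb, rfl⟩
      exact ⟨a, ha, (hu a ha b hb).le⟩
    · exact ⟨u a b₀, mem_image2_of_mem ha hb₀, (hu a ha b₀ hb₀).le⟩
  have hPB : dist ((barMap f hf)^[n] P) B ≤ ε + ε := by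
    rw [NonemptyCompacts.dist_eq, barMap_iterate_coe]
    refine hausdorffDist_le_of_net hε.le hε.le htB hBcov ?_ fun b hb => ?_
    · rintro _ ⟨_, ⟨a, ha, b, hb, rfl⟩, rfl⟩
      exact ⟨b, hb, (hfu a ha b hb).le⟩
    · exact ⟨_, mem_image_of_mem _ (mem_image2_of_mem ha₀ hb), (hfu a₀ ha₀ b hb).le⟩
  exact ⟨_, ⟨P, hrU (mem_ball.2 (hPA.trans_lt hεr)), rfl⟩, hrV (mem_ball.2 (hPB.trans_lt hεr'))⟩

theorem dense_periodics_barMap_of_invariant_near (hf : Continuous f)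
    (h : ∀ x, ∀ ε > 0, ∃ Λ : Set X, Λ.Nonempty ∧ IsCompact Λ ∧ Λ ⊆ closedBall x ε ∧
      ∃ N > 0, f^[N] '' Λ = Λ) :
    Dense (Periodics (barMap f hf)) := by
  refine Metric.dense_iff.2 fun T r hr => ?_
  obtain ⟨t, htT, htfin, hTcov⟩ := T.isCompact.finite_cover_balls (e := r / 3) (by positivity)
  obtain ⟨z₀, hz₀⟩ := nonempty_of_subset_biUnion T.nonempty hTcov
  choose! Λ hΛne hΛc hΛball N hN hΛinv using fun z => h z (r / 3) (by positivity)
  set M := ∏ z ∈ htfin.toFinset, N z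
  have hinv : ∀ z ∈ t, f^[M] '' Λ z = Λ z := fun z hz => by
    obtain ⟨k, hk⟩ : N z ∣ M := Finset.dvd_prod_of_mem N (htfin.mem_toFinset.2 hz)
    rw [hk]
    exact image_iterate_mul_eq (hΛinv z) k
  let P : NonemptyCompacts X := ⟨⟨⋃ z ∈ t, Λ z, htfin.isCompact_biUnion fun z _ => hΛc z⟩,
    (hΛne z₀).mono (subset_biUnion_of_mem hz₀)⟩
  have hPT : dist P T ≤ r / 3 + r / 3 := by
    rw [NonemptyCompacts.dist_eq]
    refine hausdorffDist_le_of_net (by positivity) (by positivity) htT hTcov ?_ fun z hz => ?_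
    · intro p hp
      obtain ⟨z, hz, hpz⟩ := mem_iUnion₂.mp hp
      exact ⟨z, hz, hΛball z hpz⟩
    · obtain ⟨p, hp⟩ := hΛne z
      exact ⟨p, mem_biUnion hz hp, hΛball z hp⟩
  refine ⟨P, mem_ball.2 (hPT.trans_lt (by linarith)), M, Finset.prod_pos fun z _ => hN z, ?_⟩
  refine NonemptyCompacts.ext ?_
  rw [barMap_iterate_coe]
  change f^[M] '' (⋃ z ∈ t, Λ z) = ⋃ z ∈ t, Λ z
  rw [image_iUnion₂]
  exact iUnion₂_congr hinv

end Hyperspace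

theorem DenseRange.exists_nsmul_dist_lt {G : Type*} [SeminormedAddCommGroup G] [CompactSpace G]
    {a : G} (ha : DenseRange (· • a : ℤ → G)) {ε : ℝ} (hε : 0 < ε) :
    ∃ L : ℕ, ∀ c : G, ∃ j ≤ L, dist (j • a) c < ε := by
  obtain ⟨s, hs⟩ := isCompact_univ.elim_finite_subcover (fun k : ℤ => ball (k • a) ε)
    (fun _ => isOpen_ball) fun c _ => mem_iUnion.2 (ha.exists_dist_lt c hε)
  set L := s.sup Int.natAbs
  refine ⟨2 * L, fun c => ?_⟩
  obtain ⟨k, hk, hkc⟩ := mem_iUnion₂.mp (hs (mem_univ (c - L • a)))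
  have hkL : k.natAbs ≤ L := Finset.le_sup (f := Int.natAbs) hk
  refine ⟨(k + L).toNat, by omega, ?_⟩
  -- a multiple `k • a` with `|k| ≤ L` close to `c - L • a` gives the natural multiple `(k + L) • a`
  have hkL' : (k + L).toNat • a = k • a + L • a := by
    rw [← natCast_zsmul, Int.toNat_of_nonneg (by omega), add_zsmul, natCast_zsmul]
  rw [hkL', ← sub_add_cancel c (L • a), dist_add_right, dist_comm]
  exact hkc

noncomputable local instance : MetricSpace (ℕ → Bool) :=
  PiNat.metricSpaceOfDiscreteUniformity fun _ => rfl

section SkewShift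

variable {G : Type*} [NormedAddCommGroup G] (α : G)

def skewShift (p : (ℕ → Bool) × G) : (ℕ → Bool) × G :=
  (fun i => p.1 (i + 1), p.2 + (1 + (p.1 0).toNat) • α)

def countTrue (x : ℕ → Bool) (n : ℕ) : ℕ := ∑ i ∈ Finset.range n, (x i).toNat

theorem continuous_skewShift : Continuous (skewShift α) :=
  (continuous_pi fun i => (continuous_apply (i + 1)).comp continuous_fst).prodMk <|
    continuous_snd.add <|
      (continuous_of_discreteTopology (f := fun b : Bool => (1 + b.toNat) • α)).comp
        ((continuous_apply 0).comp continuous_fst)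

theorem skewShift_iterate (n : ℕ) (x : ℕ → Bool) (t : G) :
    (skewShift α)^[n] (x, t) = (fun i => x (i + n), t + (n + countTrue x n) • α) := by
  induction n generalizing x t with
  | zero => simp [countTrue]
  | succ n ih =>
    have hcount : countTrue x (n + 1) = countTrue (fun i => x (i + 1)) n + (x 0).toNat :=
      Finset.sum_range_succ' _ n
    rw [iterate_succ_apply, skewShift]
    dsimp only
    rw [ih, hcount, add_assoc, ← add_nsmul]
    exact Prod.ext (funext fun i => congrArg x (by omega)) (congrArg (t + · • α) (by omega))

theorem periodics_skewShift_eq_empty (hα : addOrderOf α = 0) : Periodics (skewShift α) = ∅ := by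
  refine eq_empty_iff_forall_notMem.2 fun ⟨x, t⟩ ⟨n, hn, hper⟩ => ?_
  rw [skewShift_iterate] at hper
  exact addOrderOf_eq_zero_iff'.1 hα (n + countTrue x n) (by omega)
    (add_eq_left.1 (congrArg Prod.snd hper))

def splice (x : ℕ → Bool) (m j n : ℕ) (w : ℕ → Bool) (i : ℕ) : Bool :=
  if i < m then x i else if i < n then decide (i < m + j) else w (i - n)

variable {x w : ℕ → Bool} {m j n : ℕ}

theorem splice_of_lt {i : ℕ} (hi : i < m) : splice x m j n w i = x i := if_pos hi

theorem splice_add (hmn : m ≤ n) (i : ℕ) : splice x m j n w (i + n) = w i := by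
  simp [splice, show ¬ i + n < m by omega]

theorem countTrue_splice (h : m + j ≤ n) :
    countTrue (splice x m j n w) n = countTrue x m + j := by
  rw [countTrue, ← Finset.sum_range_add_sum_Ico _ (show m ≤ n by omega)]
  congr 1
  · exact Finset.sum_congr rfl fun i hi => by rw [splice_of_lt (Finset.mem_range.1 hi)]
  · calc ∑ i ∈ Finset.Ico m n, (splice x m j n w i).toNat
        = ∑ i ∈ Finset.Ico m n, if i < m + j then 1 else 0 :=
          Finset.sum_congr rfl fun i hi => by
            obtain ⟨him, hin⟩ := Finset.mem_Ico.1 hi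
            by_cases hij : i < m + j <;> simp [splice, hij, hin, not_lt.2 him]
      _ = j := by rw [Finset.sum_boole, Finset.Ico_filter_lt]; simp; omega

theorem skewShift_iterate_splice (h : m + j ≤ n) (t : G) :
    (skewShift α)^[n] (splice x m j n w, t) = (w, t + (n + countTrue x m + j) • α) := by
  rw [skewShift_iterate, countTrue_splice h, add_assoc]
  exact Prod.ext (funext (splice_add (by omega))) rfl

theorem dist_le_of_forall_lt_eq {x y : ℕ → Bool} {m : ℕ} (h : ∀ i < m, y i = x i) :
    dist y x ≤ (1 / 2) ^ m :=
  PiNat.mem_cylinder_iff_dist_le.1 (PiNat.mem_cylinder_iff.2 h)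

theorem isMixing_skewShift [CompactSpace G] (hα : DenseRange (· • α : ℤ → G)) :
    IsMixing (skewShift α) := by
  intro U V hU hV ⟨⟨x, t⟩, hxt⟩ ⟨⟨x', t'⟩, hxt'⟩
  obtain ⟨r, hr, hrU⟩ := Metric.isOpen_iff.mp hU _ hxt
  obtain ⟨r', hr', hrV⟩ := Metric.isOpen_iff.mp hV _ hxt'
  obtain ⟨m, hm⟩ := exists_pow_lt_of_lt_one hr (by norm_num : (1 / 2 : ℝ) < 1)
  obtain ⟨L, hL⟩ := hα.exists_nsmul_dist_lt hr'
  refine ⟨m + L, fun n hn => ?_⟩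
  obtain ⟨j, hjL, hj⟩ := hL (t' - t - (n + countTrue x m) • α)
  refine ⟨(skewShift α)^[n] (splice x m j n x', t), mem_image_of_mem _ (hrU ?_), hrV ?_⟩
  · rw [← ball_prod_same]
    exact ⟨(dist_le_of_forall_lt_eq fun i => splice_of_lt (j := j) (n := n) (w := x')).trans_lt hm,
      mem_ball_self hr⟩
  · rw [skewShift_iterate_splice α (by omega), ← ball_prod_same]
    refine ⟨mem_ball_self hr', ?_⟩
    change dist (t + (n + countTrue x m + j) • α) t' < r'
    rw [add_nsmul, dist_eq_norm, show t + ((n + countTrue x m) • α + j • α) - t'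
      = j • α - (t' - t - (n + countTrue x m) • α) by abel, ← dist_eq_norm]
    exact hj

def periodicCylinder (x : ℕ → Bool) (m N : ℕ) : Set (ℕ → Bool) :=
  {y | ∀ k, ∀ i < m, y (k * N + i) = x i}

theorem isClosed_periodicCylinder {N : ℕ} : IsClosed (periodicCylinder x m N) := by
  simp only [periodicCylinder, ofPred_forall]
  exact isClosed_iInter fun k => isClosed_iInter fun i => isClosed_iInter fun _ =>
    isClosed_eq (continuous_apply _) continuous_const

theorem splice_mem_periodicCylinder {y : ℕ → Bool} {N : ℕ} (hmN : m ≤ N)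
    (hy : y ∈ periodicCylinder x m N) : splice x m j N y ∈ periodicCylinder x m N := by
  intro k i hi
  cases k with
  | zero => simpa using splice_of_lt hi
  | succ k => rw [show (k + 1) * N + i = (k * N + i) + N by ring, splice_add hmN]; exact hy k i hi

theorem exists_invariant_near_skewShift [CompactSpace G] (hα : DenseRange (· • α : ℤ → G))
    (p : (ℕ → Bool) × G) {ε : ℝ} (hε : 0 < ε) :
    ∃ Λ : Set ((ℕ → Bool) × G), Λ.Nonempty ∧ IsCompact Λ ∧ Λ ⊆ closedBall p ε ∧
      ∃ N > 0, (skewShift α)^[N] '' Λ = Λ := by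
  obtain ⟨x, t⟩ := p
  obtain ⟨m, hm⟩ := exists_pow_lt_of_lt_one hε (by norm_num : (1 / 2 : ℝ) < 1)
  obtain ⟨L, hL⟩ := hα.exists_nsmul_dist_lt hε
  set N := m + L + 1
  set K := periodicCylinder x m N ×ˢ closedBall t ε
  have hK : IsCompact K := (isClosed_periodicCylinder.prod isClosed_closedBall).isCompact
  have hKne : K.Nonempty := by
    refine ⟨(fun i => x (i % N), t), fun k i hi => ?_, mem_closedBall_self hε.le⟩
    simp only [Nat.mul_comm k N, Nat.mul_add_mod, Nat.mod_eq_of_lt (show i < N by omega)]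
  have hsurj : K ⊆ (skewShift α)^[N] '' K := by
    rintro ⟨y, s⟩ ⟨hy, hs⟩
    obtain ⟨j, hjL, hj⟩ := hL (s - t - (N + countTrue x m) • α)
    refine ⟨(splice x m j N y, s - (N + countTrue x m + j) • α),
      ⟨splice_mem_periodicCylinder (by omega) hy, ?_⟩, ?_⟩
    · rw [mem_closedBall, add_nsmul, dist_comm, dist_eq_norm]
      rw [show t - (s - ((N + countTrue x m) • α + j • α))
        = j • α - (s - t - (N + countTrue x m) • α) by abel, ← dist_eq_norm]
      exact hj.le
    · rw [skewShift_iterate_splice α (by omega), sub_add_cancel]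
  obtain ⟨Λ, hΛK, hΛne, hΛc, hΛinv⟩ := exists_subset_image_eq_of_subset_image
    ((continuous_skewShift α).iterate N) hK hKne hsurj
  refine ⟨Λ, hΛne, hΛc, hΛK.trans ?_, N, by omega, hΛinv⟩
  rw [← closedBall_prod_same]
  refine prod_mono (fun y hy => mem_closedBall.2 ?_) subset_rfl
  exact (dist_le_of_forall_lt_eq fun i hi => by simpa using hy 0 i hi).trans hm.le

end SkewShift

/-- There is a compact system whose hyperspace map is mixing with dense periodic
points (hence Devaney chaotic), while the base map has non-dense periodic points
(hence is not Devaney chaotic). -/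
theorem exists_hyper_devaney_base_not :
    ∃ (Y : Type) (_ : MetricSpace Y) (_ : CompactSpace Y)
      (g : Y → Y) (hg : Continuous g),
      IsMixing (barMap g hg) ∧ Dense (Periodics (barMap g hg)) ∧
      ¬ Dense (Periodics g) := by
  set α : AddCircle (1 : ℝ) := ↑(√2 : ℝ)
  have hα : DenseRange (· • α : ℤ → AddCircle (1 : ℝ)) :=
    AddCircle.denseRange_zsmul_coe_iff.2 (by simpa using irrational_sqrt_two)
  refine ⟨(ℕ → Bool) × AddCircle (1 : ℝ), inferInstance, inferInstance, skewShift α,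
    continuous_skewShift α, isMixing_barMap _ (isMixing_skewShift α hα),
    dense_periodics_barMap_of_invariant_near _ fun p _ hε =>
      exists_invariant_near_skewShift α hα p hε, ?_⟩
  rw [periodics_skewShift_eq_empty α (AddCircle.denseRange_zsmul_iff.1 hα)]
  exact fun h => h.nonempty.ne_empty rfl
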